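/- The magic witness is additive under tensor products: for every n-qubit state ρ, every m-qubit state σ, and every real α > 0 with α ≠ 1, one has A_α(ρ ⊗ σ) = A_α(ρ) · A_α(σ) (where ⊗ is the Kronecker product, yielding an (n+m)-qubit state) and W_α(ρ ⊗ σ) = W_α(ρ) + W_α(σ). -/

import Mathlib

open Matrix Complex BigOperators
open scoped ComplexOrder

noncomputable section

/-- Index type for `n` qubits: functions `Fin n → Fin 2` (cardinality `2^n`). -/
abbrev QIdx (n : ℕ) := Fin n → Fin 2

/-- The four single-qubit Pauli matrices: `σ⁰ = I`, `σ¹ = σˣ`, `σ² = σᶻ`, `σ³ = σʸ`. -/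
def pauliMat : Fin 4 → Matrix (Fin 2) (Fin 2) ℂ
  | 0 => 1
  | 1 => !![0, 1; 1, 0]
  | 2 => !![1, 0; 0, -1]
  | 3 => !![0, -Complex.I; Complex.I, 0]

/-- The Pauli string `σ^{a_1} ⊗ ⋯ ⊗ σ^{a_n}` as a `2^n × 2^n` matrix. -/
def pauliString {n : ℕ} (a : Fin n → Fin 4) : Matrix (QIdx n) (QIdx n) ℂ :=
  fun i j => ∏ k, pauliMat (a k) (i k) (j k)

/-- An `n`-qubit state: positive semidefinite with unit trace. -/
def IsState {n : ℕ} (ρ : Matrix (QIdx n) (QIdx n) ℂ) : Prop :=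
  ρ.PosSemidef ∧ ρ.trace = 1

/-- The `α`-moment of the Pauli spectrum `A_α(ρ) = 2^{-n} ∑_P |tr(ρP)|^{2α}`. -/
def Amom {n : ℕ} (α : ℝ) (ρ : Matrix (QIdx n) (QIdx n) ℂ) : ℝ :=
  ((2:ℝ)^n)⁻¹ * ∑ a : Fin n → Fin 4, (‖(ρ * pauliString a).trace‖) ^ (2 * α)

/-- The 2-Rényi entropy `S₂(ρ) = -ln tr(ρ²)`. -/
def S2 {n : ℕ} (ρ : Matrix (QIdx n) (QIdx n) ℂ) : ℝ :=
  - Real.log ((ρ * ρ).trace.re)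

/-- The magic witness `W_α(ρ) = (1/(1-α)) ln A_α(ρ) - ((1-2α)/(1-α)) S₂(ρ)`. -/
def Wit {n : ℕ} (α : ℝ) (ρ : Matrix (QIdx n) (QIdx n) ℂ) : ℝ :=
  (1 / (1 - α)) * Real.log (Amom α ρ) - ((1 - 2*α)/(1 - α)) * S2 ρ

/-- The stabilizer norm `D(ρ) = A_{1/2}(ρ) = 2^{-n} ∑_P |tr(ρP)|`. -/
def Dnorm {n : ℕ} (ρ : Matrix (QIdx n) (QIdx n) ℂ) : ℝ :=
  Amom (1/2) ρ

/-- A Clifford unitary: unitary mapping every Pauli string to `±` a Pauli string. -/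
def IsCliffordUnitary {n : ℕ} (U : Matrix (QIdx n) (QIdx n) ℂ) : Prop :=
  U ∈ Matrix.unitaryGroup (QIdx n) ℂ ∧
    ∀ a : Fin n → Fin 4, ∃ (b : Fin n → Fin 4) (ε : ℝ),
      (ε = 1 ∨ ε = -1) ∧ U * pauliString a * Uᴴ = (ε : ℂ) • pauliString b

/-- The computational all-zeros basis vector `|0⟩^{⊗n}`. -/
def zeroVec (n : ℕ) : QIdx n → ℂ :=
  fun i => if (∀ k, i k = 0) then 1 else 0

/-- A pure stabilizer state vector: `U|0⟩^{⊗n}` for a Clifford unitary `U`. -/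
def IsPureStab {n : ℕ} (ψ : QIdx n → ℂ) : Prop :=
  ∃ U, IsCliffordUnitary U ∧ ψ = U.mulVec (zeroVec n)

/-- The rank-one projector `|ψ⟩⟨ψ|`. -/
def proj {n : ℕ} (ψ : QIdx n → ℂ) : Matrix (QIdx n) (QIdx n) ℂ :=
  Matrix.vecMulVec ψ (star ψ)

/-- A mixed stabilizer state: a finite convex combination of pure stabilizer projectors. -/
def IsMixedStab {n : ℕ} (ρ : Matrix (QIdx n) (QIdx n) ℂ) : Prop :=
  ∃ (k : ℕ) (p : Fin k → ℝ) (ψ : Fin k → QIdx n → ℂ),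
    (∀ i, 0 ≤ p i) ∧ (∑ i, p i = 1) ∧ (∀ i, IsPureStab (ψ i)) ∧
    ρ = ∑ i, (p i : ℂ) • proj (ψ i)

/-- The set of values `ln ∑ᵢ |xᵢ|` over finite real stabilizer decompositions of `ρ`. -/
def StabDecomps {n : ℕ} (ρ : Matrix (QIdx n) (QIdx n) ℂ) : Set ℝ :=
  { r | ∃ (k : ℕ) (x : Fin k → ℝ) (ψ : Fin k → QIdx n → ℂ),
      (∀ i, IsPureStab (ψ i)) ∧ ρ = ∑ i, (x i : ℂ) • proj (ψ i) ∧
      r = Real.log (∑ i, |x i|) }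

/-- The log-free robustness of magic. -/
def LR {n : ℕ} (ρ : Matrix (QIdx n) (QIdx n) ℂ) : ℝ := sInf (StabDecomps ρ)

open Classical in
/-- Positive-semidefinite square root (junk value `0` off the PSD cone). -/
def psdSqrt {n : ℕ} (A : Matrix (QIdx n) (QIdx n) ℂ) : Matrix (QIdx n) (QIdx n) ℂ :=
  if h : A.PosSemidef then
    h.1.eigenvectorUnitary.1 * diagonal ((fun x => ((Real.sqrt x : ℝ) : ℂ)) ∘ h.1.eigenvalues) *
      (star h.1.eigenvectorUnitary : Matrix (QIdx n) (QIdx n) ℂ)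
  else 0

/-- The Uhlmann fidelity `F(ρ,σ) = (tr √(√ρ σ √ρ))²`. -/
def fidelity {n : ℕ} (ρ σ : Matrix (QIdx n) (QIdx n) ℂ) : ℝ :=
  ((psdSqrt (psdSqrt ρ * σ * psdSqrt ρ)).trace.re) ^ 2

/-- The stabilizer fidelity `D_F(ρ) = inf { -ln F(ρ,σ) : σ a mixed stabilizer state }`. -/
def DF {n : ℕ} (ρ : Matrix (QIdx n) (QIdx n) ℂ) : ℝ :=
  sInf { r | ∃ σ, IsMixedStab σ ∧ r = - Real.log (fidelity ρ σ) }

/-- Filtered Pauli moment `Ã_α(ρ) = (2^n A_α(ρ) - 1)/(2^n - 1)`. -/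
def Atil {n : ℕ} (α : ℝ) (ρ : Matrix (QIdx n) (QIdx n) ℂ) : ℝ :=
  ((2:ℝ)^n * Amom α ρ - 1) / ((2:ℝ)^n - 1)

/-- Filtered stabilizer norm `D̃(ρ) = (2^n D(ρ) - 1)/(2^n - 1)`. -/
def Dtil {n : ℕ} (ρ : Matrix (QIdx n) (QIdx n) ℂ) : ℝ :=
  ((2:ℝ)^n * Dnorm ρ - 1) / ((2:ℝ)^n - 1)

/-- Filtered magic witness `W̃_α(ρ) = (1/(1-α)) ln Ã_α(ρ) + ((1-2α)/(1-α)) ln Ã₁(ρ)`. -/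
def Wtil {n : ℕ} (α : ℝ) (ρ : Matrix (QIdx n) (QIdx n) ℂ) : ℝ :=
  (1/(1-α)) * Real.log (Atil α ρ) + ((1 - 2*α)/(1-α)) * Real.log (Atil 1 ρ)

/-- The maximally mixed state `I/2^n`. -/
def maxMixed (n : ℕ) : Matrix (QIdx n) (QIdx n) ℂ := ((2:ℂ)^n)⁻¹ • 1

/-- The single-qubit T-state vector `|T⟩ = (|0⟩ + e^{-iπ/4}|1⟩)/√2`. -/
def Tket : QIdx 1 → ℂ :=
  fun i => if i 0 = 0 then (Real.sqrt 2 : ℂ)⁻¹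
           else Complex.exp (-(Real.pi/4 : ℂ) * Complex.I) * (Real.sqrt 2 : ℂ)⁻¹

/-- The depolarized T-state `ρ_p = (1-p)|T⟩⟨T| + p·I₂/2`. -/
def rhoDep (p : ℝ) : Matrix (QIdx 1) (QIdx 1) ℂ :=
  ((1 - p : ℝ) : ℂ) • proj Tket + ((p : ℝ) : ℂ) • (((2:ℂ))⁻¹ • 1)


/-- Tensor (Kronecker) product of an `n`-qubit matrix and an `m`-qubit matrix,
realized on the `(n+m)`-qubit index set by splitting an index of `Fin (n+m) → Fin 2`
into its first `n` and last `m` components. -/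
def qTensor {n m : ℕ} (ρ : Matrix (QIdx n) (QIdx n) ℂ)
    (σ : Matrix (QIdx m) (QIdx m) ℂ) : Matrix (QIdx (n+m)) (QIdx (n+m)) ℂ :=
  fun i j => ρ (fun k => i (Fin.castAdd m k)) (fun k => j (Fin.castAdd m k)) *
             σ (fun k => i (Fin.natAdd n k)) (fun k => j (Fin.natAdd n k))


open scoped Kronecker

/-!
Up to the reindexing `Fin (n + m) ≃ Fin n ⊕ Fin m` of the qubits, `qTensor` is the Kronecker
product, and a Pauli string on `n + m` qubits is the Kronecker product of its first `n` and last
`m` factors. Hence every Pauli expectation of `ρ ⊗ σ` factors, `tr((ρ ⊗ σ)(P ⊗ Q)) = tr(ρP) tr(σQ)`,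
so the sum defining `A_α` factors, and likewise `tr((ρ ⊗ σ)²) = tr(ρ²) tr(σ²)`. Taking logarithms
(all the quantities involved are positive) turns both products into sums.
-/

theorem Fin.sum_pi_add_mul {n m : ℕ} {β R : Type*} [Fintype β] [CommSemiring R]
    (f : (Fin n → β) → R) (g : (Fin m → β) → R) :
    ∑ a : Fin (n + m) → β, f (fun k => a (Fin.castAdd m k)) * g (fun k => a (Fin.natAdd n k))
      = (∑ p, f p) * ∑ q, g q := by
  rw [Finset.sum_mul_sum, ← Fintype.sum_prod_type']
  exact Fintype.sum_equiv (Fin.appendEquiv n m).symm _ _ fun _ => rfl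

theorem Matrix.trace_submatrix_equiv {ι κ R : Type*} [Fintype ι] [Fintype κ] [AddCommMonoid R]
    (A : Matrix ι ι R) (e : κ ≃ ι) : (A.submatrix e e).trace = A.trace :=
  e.sum_comp fun i => A i i

theorem Matrix.trace_conjTranspose_mul_self_pos {ι κ : Type*} [Fintype ι] [Fintype κ]
    {A : Matrix ι κ ℂ} (hA : A ≠ 0) : 0 < (Aᴴ * A).trace :=
  (posSemidef_conjTranspose_mul_self A).trace_nonneg.lt_of_ne'
    (trace_conjTranspose_mul_self_eq_zero_iff.not.mpr hA)

section Tensor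

variable {n m : ℕ}

theorem qTensor_eq_submatrix_kronecker (A : Matrix (QIdx n) (QIdx n) ℂ)
    (B : Matrix (QIdx m) (QIdx m) ℂ) :
    qTensor A B = (A ⊗ₖ B).submatrix (Fin.appendEquiv n m).symm (Fin.appendEquiv n m).symm :=
  rfl

theorem qTensor_mul (A C : Matrix (QIdx n) (QIdx n) ℂ) (B D : Matrix (QIdx m) (QIdx m) ℂ) :
    qTensor A B * qTensor C D = qTensor (A * C) (B * D) := by
  simp only [qTensor_eq_submatrix_kronecker, submatrix_mul_equiv, mul_kronecker_mul]

theorem trace_qTensor (A : Matrix (QIdx n) (QIdx n) ℂ) (B : Matrix (QIdx m) (QIdx m) ℂ) :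
    (qTensor A B).trace = A.trace * B.trace := by
  rw [qTensor_eq_submatrix_kronecker, trace_submatrix_equiv, trace_kronecker]

theorem pauliString_eq_qTensor (a : Fin (n + m) → Fin 4) :
    pauliString a = qTensor (pauliString fun k => a (Fin.castAdd m k))
      (pauliString fun k => a (Fin.natAdd n k)) := by
  ext i j
  exact Fin.prod_univ_add fun k => pauliMat (a k) (i k) (j k)

theorem Amom_qTensor (α : ℝ) (ρ : Matrix (QIdx n) (QIdx n) ℂ) (σ : Matrix (QIdx m) (QIdx m) ℂ) :
    Amom α (qTensor ρ σ) = Amom α ρ * Amom α σ := by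
  have pauli_factor (a : Fin (n + m) → Fin 4) :
      ‖(qTensor ρ σ * pauliString a).trace‖ ^ (2 * α)
        = ‖(ρ * pauliString fun k => a (Fin.castAdd m k)).trace‖ ^ (2 * α) *
          ‖(σ * pauliString fun k => a (Fin.natAdd n k)).trace‖ ^ (2 * α) := by
    rw [pauliString_eq_qTensor, qTensor_mul, trace_qTensor, norm_mul,
      Real.mul_rpow (norm_nonneg _) (norm_nonneg _)]
  rw [Amom, Amom, Amom, Finset.sum_congr rfl fun a _ => pauli_factor a,
    Fin.sum_pi_add_mul (n := n) (m := m) (fun p => ‖(ρ * pauliString p).trace‖ ^ (2 * α))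
      fun q => ‖(σ * pauliString q).trace‖ ^ (2 * α), pow_add, mul_inv]
  ring

theorem S2_qTensor {ρ : Matrix (QIdx n) (QIdx n) ℂ} {σ : Matrix (QIdx m) (QIdx m) ℂ}
    (hρ : ρ.IsHermitian) (hσ : σ.IsHermitian) (hρ0 : ρ ≠ 0) (hσ0 : σ ≠ 0) :
    S2 (qTensor ρ σ) = S2 ρ + S2 σ := by
  have hρρ : 0 < (ρ * ρ).trace := by simpa only [hρ.eq] using trace_conjTranspose_mul_self_pos hρ0
  have hσσ : 0 < (σ * σ).trace := by simpa only [hσ.eq] using trace_conjTranspose_mul_self_pos hσ0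
  obtain ⟨hρ_re, hρ_im⟩ := Complex.pos_iff.mp hρρ
  obtain ⟨hσ_re, -⟩ := Complex.pos_iff.mp hσσ
  rw [S2, S2, S2, qTensor_mul, trace_qTensor, Complex.mul_re, ← hρ_im, zero_mul, sub_zero,
    Real.log_mul hρ_re.ne' hσ_re.ne']
  ring

end Tensor

theorem pauliString_zero {n : ℕ} : pauliString (fun _ : Fin n => (0 : Fin 4)) = 1 := by
  ext i j
  simp only [pauliString, pauliMat, one_apply, Finset.prod_boole]
  simp [funext_iff]

theorem Amom_pos {n : ℕ} (α : ℝ) {ρ : Matrix (QIdx n) (QIdx n) ℂ} (hρ : ρ.trace ≠ 0) :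
    0 < Amom α ρ := by
  have identity_term_pos :
      0 < ‖(ρ * pauliString fun _ : Fin n => (0 : Fin 4)).trace‖ ^ (2 * α) := by
    rw [pauliString_zero, mul_one]
    exact Real.rpow_pos_of_pos (norm_pos_iff.mpr hρ) _
  refine mul_pos (by positivity) (identity_term_pos.trans_le ?_)
  exact Finset.single_le_sum (f := fun a => ‖(ρ * pauliString a).trace‖ ^ (2 * α))
    (fun a _ => Real.rpow_nonneg (norm_nonneg _) _) (Finset.mem_univ _)

theorem IsState.ne_zero {n : ℕ} {ρ : Matrix (QIdx n) (QIdx n) ℂ} (hρ : IsState ρ) : ρ ≠ 0 := by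
  rintro rfl
  simpa using hρ.2

theorem witness_additive_general {n m : ℕ} (ρ : Matrix (QIdx n) (QIdx n) ℂ)
    (σ : Matrix (QIdx m) (QIdx m) ℂ) (hρ : IsState ρ) (hσ : IsState σ)
    (α : ℝ) :
    Amom α (qTensor ρ σ) = Amom α ρ * Amom α σ ∧
    Wit α (qTensor ρ σ) = Wit α ρ + Wit α σ := by
  refine ⟨Amom_qTensor α ρ σ, ?_⟩
  have hAρ := Amom_pos α (hρ.2 ▸ one_ne_zero)
  have hAσ := Amom_pos α (hσ.2 ▸ one_ne_zero)
  rw [Wit, Wit, Wit, Amom_qTensor, Real.log_mul hAρ.ne' hAσ.ne',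
    S2_qTensor hρ.1.1 hσ.1.1 hρ.ne_zero hσ.ne_zero]
  ring

/-- the Pauli moments are multiplicative and the magic witness is
additive under tensor products. -/
theorem witness_additive {n m : ℕ} (ρ : Matrix (QIdx n) (QIdx n) ℂ)
    (σ : Matrix (QIdx m) (QIdx m) ℂ) (hρ : IsState ρ) (hσ : IsState σ)
    (α : ℝ) (hα : 0 < α) (hα1 : α ≠ 1) :
    Amom α (qTensor ρ σ) = Amom α ρ * Amom α σ ∧
    Wit α (qTensor ρ σ) = Wit α ρ + Wit α σ :=
  witness_additive_general ρ σ hρ hσ α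

end
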